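/- Let q ≥ 3 and let ∇ ∈ ℝ^{p×n} be the discrete gradient operator of the 3-dimensional regular grid graph on V = {0,…,q−1}³, with n = q³ and p = 3q²(q−1). Let ℓ be an integer with 54 < ℓ ≤ p and let m ∈ ℕ satisfy m ≥ 2n − (2/3)(ℓ + (3ℓ²)^{1/3} + 2(ℓ/3)^{1/3} − 2). Then κ_∇(ℓ) ≤ m/2; that is, the number of measurements m meets the sufficient condition of the unknown-cosupport uniqueness criterion. -/

import Mathlib

/-- Base-`q` encoding of a grid point, used to orient the edges of the grid graph. -/
def enc (q d : ℕ) (v : Fin d → Fin q) : ℕ := ∑ i : Fin d, q ^ (i : ℕ) * (v i : ℕ)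

/-- The (oriented) edges of the regular grid graph on `{0,…,q−1}^d`: pairs of vertices at
ℓ1-distance 1, canonically oriented. They index the rows of the discrete gradient. -/
abbrev OEdge (q d : ℕ) : Type :=
  {e : (Fin d → Fin q) × (Fin d → Fin q) //
    (∑ i, |(e.1 i : ℤ) - (e.2 i : ℤ)|) = 1 ∧ enc q d e.1 < enc q d e.2}

/-- The discrete gradient operator of the regular grid graph: one row per edge
`e = (v₁, v₂)`, with entry `−1` in the column of `v₁`, `+1` in the column of `v₂`. -/
def grad (q d : ℕ) : Matrix (OEdge q d) (Fin d → Fin q) ℝ :=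
  Matrix.of fun e v => if v = e.1.2 then 1 else if v = e.1.1 then -1 else 0

/-- `W_Λ`: the nullspace of the rows of the discrete gradient indexed by `Λ`. -/
noncomputable def Wgrad (q d : ℕ) (Λ : Finset (OEdge q d)) :
    Submodule ℝ ((Fin d → Fin q) → ℝ) :=
  ⨅ e ∈ Λ, LinearMap.ker
    ((LinearMap.proj e : (OEdge q d → ℝ) →ₗ[ℝ] ℝ) ∘ₗ (grad q d).mulVecLin)

/-- `κ_∇(ℓ) = max{dim W_Λ : Λ ⊆ E, |Λ| ≥ ℓ}` for the discrete gradient of the grid. -/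
noncomputable def kappaGrad (q d ℓ : ℕ) : ℕ :=
  (Finset.univ.filter (fun Λ : Finset (OEdge q d) => ℓ ≤ Λ.card)).sup
    (fun Λ => Module.finrank ℝ (Wgrad q d Λ))

/-!
Every `u ∈ W_Λ` is constant on the connected components of the graph with edge set `Λ`, so
`dim W_Λ` is at most the number `C` of these components. A set `T` of `k` grid points spans at
most `isoBound k = 3k - 3k^{2/3}` grid edges: the edges in direction `i` start at points of `T`
that are not the last point of `T` on their line, so there are at most `k - |πᵢ T|` of them,
and the Loomis–Whitney inequality `k² ≤ |π₀ T| |π₁ T| |π₂ T|` together with AM–GM gives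
`∑ |πᵢ T| ≥ 3k^{2/3}`. Since `isoBound a + isoBound b ≤ isoBound (a + b - 1)`, summing over
the components gives `ℓ ≤ |Λ| ≤ isoBound (n - C + 1)`, and inverting `isoBound` (after
substituting cubes) bounds `C`.
-/

open Finset

theorem Fin.removeNth_eq_removeNth_iff {n : ℕ} {α : Type*} (i : Fin (n + 1))
    {v w : Fin (n + 1) → α} : Fin.removeNth i v = Fin.removeNth i w ↔ ∀ j ≠ i, v j = w j := by
  refine ⟨fun h j hj => ?_, fun h => funext fun k => h _ (Fin.succAbove_ne i k)⟩
  obtain ⟨k, rfl⟩ := Fin.exists_succAbove_eq hj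
  exact congrFun h k

theorem Fin.eq_of_removeNth_eq {n : ℕ} {α : Type*} {i j : Fin (n + 1)} (hij : i ≠ j)
    {v w : Fin (n + 1) → α} (hi : Fin.removeNth i v = Fin.removeNth i w)
    (hj : Fin.removeNth j v = Fin.removeNth j w) : v = w := by
  rw [Fin.removeNth_eq_removeNth_iff] at hi hj
  funext k
  by_cases hk : k = i
  · exact hj k (hk ▸ hij)
  · exact hi k hk

def lineNonMax {d : ℕ} {α : Type*} [LinearOrder α] (i : Fin d) (T : Finset (Fin d → α)) :
    Finset (Fin d → α) :=
  T.filter fun v => ∃ w ∈ T, (∀ j ≠ i, v j = w j) ∧ v i < w i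

theorem card_lineNonMax_add_card_image_removeNth_le {n : ℕ} {α : Type*} [LinearOrder α]
    (i : Fin (n + 1)) (T : Finset (Fin (n + 1) → α)) :
    #(lineNonMax i T) + #(T.image (Fin.removeNth i)) ≤ #T := by
  set L := lineNonMax i T
  have hLT : L ⊆ T := filter_subset _ _
  have hshadow : T.image (Fin.removeNth i) ⊆ (T \ L).image (Fin.removeNth i) := by
    intro p hp
    obtain ⟨v, hv, rfl⟩ := mem_image.mp hp
    obtain ⟨w, hw, hmax⟩ := (T.filter fun w => Fin.removeNth i w = Fin.removeNth i v)
      |>.exists_max_image (· i) ⟨v, mem_filter.mpr ⟨hv, rfl⟩⟩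
    rw [mem_filter] at hw
    refine mem_image.mpr ⟨w, mem_sdiff.mpr ⟨hw.1, fun hwL => ?_⟩, hw.2⟩
    obtain ⟨-, w', hw'T, hoff, hlt⟩ := mem_filter.mp hwL
    have hw' : Fin.removeNth i w' = Fin.removeNth i v :=
      ((Fin.removeNth_eq_removeNth_iff i).mpr fun j hj => (hoff j hj).symm).trans hw.2
    exact (hmax w' (mem_filter.mpr ⟨hw'T, hw'⟩)).not_gt hlt
  calc #L + #(T.image (Fin.removeNth i)) ≤ #L + #(T \ L) :=
        Nat.add_le_add_left ((card_le_card hshadow).trans card_image_le) _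
    _ = #T := by rw [add_comm, card_sdiff_add_card_eq_card hLT]

theorem card_sq_le_prod_card_image_removeNth {α : Type*} [DecidableEq α]
    (T : Finset (Fin 3 → α)) : #T ^ 2 ≤ ∏ i, #(T.image (Fin.removeNth i)) := by
  set S : Fin 3 → Finset (Fin 2 → α) := fun i => T.image (Fin.removeNth i)
  set X := T.image (· 0)
  set A : α → Finset (Fin 3 → α) := fun t => T.filter (· 0 = t)
  set B : Fin 3 → α → Finset (Fin 2 → α) := fun i t => (S i).filter (· 0 = t)
  have hmemB : ∀ i : Fin 3, i ≠ 0 → ∀ t, ∀ v ∈ A t, Fin.removeNth i v ∈ B i t := by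
    intro i hi t v hv
    obtain ⟨hvT, hv0⟩ := mem_filter.mp hv
    refine mem_filter.mpr ⟨mem_image_of_mem _ hvT, ?_⟩
    fin_cases i
    · exact absurd rfl hi
    all_goals exact hv0
  have hA : #T = ∑ t ∈ X, #(A t) := card_eq_sum_card_fiberwise fun v hv => mem_image_of_mem _ hv
  have hB : ∀ i : Fin 3, i ≠ 0 → #(S i) = ∑ t ∈ X, #(B i t) := by
    intro i hi
    refine card_eq_sum_card_fiberwise fun p hp => ?_
    obtain ⟨v, hv, rfl⟩ := mem_image.mp hp
    have := mem_filter.mp (hmemB i hi _ v (mem_filter.mpr ⟨hv, rfl⟩))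
    exact mem_image.mpr ⟨v, hv, this.2.symm⟩
  have hA0 : ∀ t, #(A t) ≤ #(S 0) := fun t =>
    card_le_card_of_injOn (Fin.removeNth 0)
      (fun v hv => mem_image_of_mem _ (mem_filter.mp hv).1) fun v hv w hw h => funext fun j => by
        by_cases hj : j = 0
        · subst hj; exact (mem_filter.mp hv).2.trans (mem_filter.mp hw).2.symm
        · exact (Fin.removeNth_eq_removeNth_iff 0).mp h j hj
  have hA12 : ∀ t, #(A t) ≤ #(B 1 t) * #(B 2 t) := fun t => by
    rw [← card_product]
    exact card_le_card_of_injOn (fun v => (Fin.removeNth 1 v, Fin.removeNth 2 v))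
      (fun v hv => mem_product.mpr ⟨hmemB 1 (by decide) t v hv, hmemB 2 (by decide) t v hv⟩)
      fun v _ w _ h => Fin.eq_of_removeNth_eq (by decide) (Prod.ext_iff.mp h).1
        (Prod.ext_iff.mp h).2
  calc #T ^ 2 = (∑ t ∈ X, #(A t)) ^ 2 := by rw [hA]
    _ ≤ (∑ t ∈ X, #(S 0) * #(B 1 t)) * ∑ t ∈ X, #(B 2 t) :=
        sum_sq_le_sum_mul_sum_of_sq_le_mul X (fun _ _ => Nat.zero_le _)
          (fun _ _ => Nat.zero_le _) fun t _ => by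
            rw [sq, mul_assoc]; exact Nat.mul_le_mul (hA0 t) (hA12 t)
    _ = ∏ i, #(S i) := by
        rw [← mul_sum, ← hB 1 (by decide), ← hB 2 (by decide), Fin.prod_univ_three, mul_assoc]

theorem Real.exists_pow_three_eq {x : ℝ} (hx : 0 ≤ x) : ∃ t, 0 ≤ t ∧ t ^ 3 = x :=
  ⟨x ^ ((3 : ℕ)⁻¹ : ℝ), Real.rpow_nonneg hx _, Real.rpow_inv_natCast_pow hx three_ne_zero⟩

theorem Real.pow_three_rpow_one_third {t : ℝ} (ht : 0 ≤ t) : (t ^ 3) ^ ((1 : ℝ) / 3) = t := by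
  rw [← Real.rpow_natCast, ← Real.rpow_mul ht]
  norm_num

theorem Real.pow_three_rpow_two_thirds {t : ℝ} (ht : 0 ≤ t) :
    (t ^ 3) ^ ((2 : ℝ) / 3) = t ^ 2 := by
  rw [← Real.rpow_natCast, ← Real.rpow_mul ht]
  norm_num

theorem three_mul_rpow_two_thirds_le_sum {k : ℝ} {s : Fin 3 → ℝ} (hk : 0 ≤ k)
    (hs : ∀ i, 0 ≤ s i) (h : k ^ 2 ≤ ∏ i, s i) : 3 * k ^ ((2 : ℝ) / 3) ≤ ∑ i, s i := by
  obtain ⟨t, ht, rfl⟩ := Real.exists_pow_three_eq hk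
  have hamgm := Real.geom_mean_le_arith_mean_weighted univ (fun _ => (1 : ℝ) / 3) s
    (fun _ _ => by norm_num) (by simp) fun i _ => hs i
  rw [Real.finsetProd_rpow _ _ fun i _ => hs i, ← mul_sum] at hamgm
  have hprod : t ^ 2 ≤ (∏ i, s i) ^ ((1 : ℝ) / 3) := by
    rw [← Real.pow_three_rpow_one_third (sq_nonneg t)]
    exact Real.rpow_le_rpow (by positivity) (by rw [← pow_mul, mul_comm, pow_mul]; exact h)
      (by norm_num)
  rw [Real.pow_three_rpow_two_thirds ht]
  linarith

theorem SimpleGraph.Reachable.apply_eq_of_forall_adj {V β : Type*} {G : SimpleGraph V}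
    {f : V → β} (hf : ∀ v w, G.Adj v w → f v = f w) {v w : V} (h : G.Reachable v w) :
    f v = f w := by
  obtain ⟨p⟩ := h
  induction p with
  | nil => rfl
  | cons hadj _ ih => exact (hf _ _ hadj).trans ih

theorem SimpleGraph.finrank_le_card_connectedComponent {K V : Type*} [Field K] [Finite V]
    (G : SimpleGraph V) (W : Submodule K (V → K))
    (hW : ∀ u ∈ W, ∀ v w, G.Adj v w → u v = u w) :
    Module.finrank K W ≤ Nat.card G.ConnectedComponent := by
  have := Fintype.ofFinite G.ConnectedComponent
  set lift := LinearMap.funLeft K K G.connectedComponentMk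
  have hW : W ≤ LinearMap.range lift := fun u hu =>
    ⟨fun c => u c.out, funext fun v =>
      (ConnectedComponent.eq.mp (G.connectedComponentMk v).out_eq).apply_eq_of_forall_adj
        (hW u hu)⟩
  calc Module.finrank K W ≤ Module.finrank K (LinearMap.range lift) := Submodule.finrank_mono hW
    _ ≤ Module.finrank K (G.ConnectedComponent → K) := LinearMap.finrank_range_le _
    _ = Nat.card G.ConnectedComponent := by simp

namespace OEdge

variable {q d : ℕ}

theorem fst_ne_snd (e : OEdge q d) : e.1.1 ≠ e.1.2 := fun h => e.2.2.ne (congrArg (enc q d) h)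

theorem enc_snd_sub_enc_fst (e : OEdge q d) {i : Fin d} (hoff : ∀ j ≠ i, e.1.1 j = e.1.2 j) :
    (enc q d e.1.2 : ℤ) - enc q d e.1.1 = q ^ (i : ℕ) * ((e.1.2 i : ℤ) - e.1.1 i) := by
  simp only [enc, Nat.cast_sum, Nat.cast_mul, Nat.cast_pow, ← sum_sub_distrib, ← mul_sub]
  exact sum_eq_single i (fun j _ hj => by rw [hoff j hj, sub_self, mul_zero]) (by simp)

theorem unit_step_of_ne (e : OEdge q d) {i : Fin d} (hi : e.1.1 i ≠ e.1.2 i) :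
    (∀ j ≠ i, e.1.1 j = e.1.2 j) ∧ (e.1.2 i : ℕ) = e.1.1 i + 1 := by
  obtain ⟨hsum, henc⟩ := e.2
  set δ : Fin d → ℤ := fun j => |(e.1.1 j : ℤ) - e.1.2 j|
  have hδ : ∀ j ∈ univ.erase i, 0 ≤ δ j := fun j _ => abs_nonneg _
  have hi1 : 1 ≤ δ i := Int.one_le_abs (sub_ne_zero.mpr (by exact_mod_cast Fin.val_injective.ne hi))
  rw [← add_sum_erase _ _ (mem_univ i)] at hsum
  have hrest : ∑ j ∈ univ.erase i, δ j = 0 := by linarith [sum_nonneg hδ]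
  have hoff : ∀ j ≠ i, e.1.1 j = e.1.2 j := fun j hj => by
    have := (sum_eq_zero_iff_of_nonneg hδ).mp hrest j (by simp [hj])
    exact Fin.ext (by simpa [δ, sub_eq_zero] using this)
  refine ⟨hoff, ?_⟩
  have hpos : 0 < (q : ℤ) ^ (i : ℕ) * ((e.1.2 i : ℤ) - e.1.1 i) := by
    rw [← enc_snd_sub_enc_fst e hoff]; omega
  have := pos_of_mul_pos_right hpos (by positivity)
  have : δ i = 1 := by linarith
  rw [abs_eq zero_le_one] at this
  omega

end OEdge

section Edges

variable {q d : ℕ}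

theorem card_le_sum_card_filter_ne (F : Finset (OEdge q d)) :
    #F ≤ ∑ i, #(F.filter fun e => e.1.1 i ≠ e.1.2 i) := by
  refine (card_le_card fun e he => ?_).trans card_biUnion_le
  obtain ⟨i, hi⟩ := Function.ne_iff.mp (OEdge.fst_ne_snd e)
  exact mem_biUnion.mpr ⟨i, mem_univ _, mem_filter.mpr ⟨he, hi⟩⟩

theorem card_filter_ne_le_card_lineNonMax {F : Finset (OEdge q d)} {T : Finset (Fin d → Fin q)}
    (hF : ∀ e ∈ F, e.1.1 ∈ T ∧ e.1.2 ∈ T) (i : Fin d) :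
    #(F.filter fun e => e.1.1 i ≠ e.1.2 i) ≤ #(lineNonMax i T) := by
  refine card_le_card_of_injOn (fun e => e.1.1) (fun e he => ?_) fun e he e' he' hfst => ?_
  · obtain ⟨heF, hi⟩ := mem_filter.mp he
    obtain ⟨hoff, hstep⟩ := OEdge.unit_step_of_ne e hi
    refine mem_filter.mpr ⟨(hF e heF).1, e.1.2, (hF e heF).2, hoff, ?_⟩
    show e.1.1 i < e.1.2 i
    exact Fin.lt_def.mpr (by omega)
  · simp only at hfst
    obtain ⟨hoff, hstep⟩ := OEdge.unit_step_of_ne e (mem_filter.mp he).2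
    obtain ⟨hoff', hstep'⟩ := OEdge.unit_step_of_ne e' (mem_filter.mp he').2
    have hsnd : e.1.2 = e'.1.2 := funext fun j => by
      by_cases hj : j = i
      · subst hj; exact Fin.ext (by rw [hstep, hstep', hfst])
      · rw [← hoff j hj, hfst, hoff' j hj]
    exact Subtype.ext (Prod.ext hfst hsnd)

theorem card_add_sum_card_image_removeNth_le {n : ℕ} {F : Finset (OEdge q (n + 1))}
    {T : Finset (Fin (n + 1) → Fin q)} (hF : ∀ e ∈ F, e.1.1 ∈ T ∧ e.1.2 ∈ T) :
    #F + ∑ i, #(T.image (Fin.removeNth i)) ≤ (n + 1) * #T := by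
  calc #F + ∑ i, #(T.image (Fin.removeNth i))
      ≤ ∑ i, (#(lineNonMax i T) + #(T.image (Fin.removeNth i))) := by
        rw [sum_add_distrib]
        exact Nat.add_le_add_right ((card_le_sum_card_filter_ne F).trans
          (sum_le_sum fun i _ => card_filter_ne_le_card_lineNonMax hF i)) _
    _ ≤ ∑ _i : Fin (n + 1), #T :=
        sum_le_sum fun i _ => card_lineNonMax_add_card_image_removeNth_le i T
    _ = (n + 1) * #T := by simp

end Edges

noncomputable def isoBound (k : ℝ) : ℝ := 3 * k - 3 * k ^ ((2 : ℝ) / 3)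

theorem isoBound_pow_three {t : ℝ} (ht : 0 ≤ t) : isoBound (t ^ 3) = 3 * t ^ 3 - 3 * t ^ 2 := by
  rw [isoBound, Real.pow_three_rpow_two_thirds ht]

theorem isoBound_add_isoBound_le {a b : ℝ} (ha : 1 ≤ a) (hb : 1 ≤ b) :
    isoBound a + isoBound b ≤ isoBound (a + b - 1) := by
  obtain ⟨α, hα, rfl⟩ := Real.exists_pow_three_eq (zero_le_one.trans ha)
  obtain ⟨β, hβ, rfl⟩ := Real.exists_pow_three_eq (zero_le_one.trans hb)
  obtain ⟨γ, hγ, hγαβ⟩ := Real.exists_pow_three_eq (by linarith : 0 ≤ α ^ 3 + β ^ 3 - 1)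
  have hα1 : 1 ≤ α := le_of_pow_le_pow_left₀ three_ne_zero hα (by simpa using ha)
  have hβ1 : 1 ≤ β := le_of_pow_le_pow_left₀ three_ne_zero hβ (by simpa using hb)
  have hpoly : (α ^ 3 + β ^ 3 - 1) ^ 2 ≤ (α ^ 2 + β ^ 2 - 1) ^ 3 := by
    have h := mul_nonneg (sub_nonneg.2 hα1) (sub_nonneg.2 hβ1)
    nlinarith [mul_nonneg h (sq_nonneg (α - β)), mul_nonneg h h, sq_nonneg (α - β),
      mul_nonneg (sq_nonneg (α * β)) (sq_nonneg (α - β)), sq_nonneg (α * β - 1)]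
  have hγ2 : γ ^ 2 ≤ α ^ 2 + β ^ 2 - 1 :=
    le_of_pow_le_pow_left₀ three_ne_zero (by nlinarith)
      (by rw [← pow_mul, mul_comm, pow_mul, hγαβ]; exact hpoly)
  rw [← hγαβ, isoBound_pow_three hα, isoBound_pow_three hβ, isoBound_pow_three hγ]
  linarith

theorem sum_isoBound_le {ι : Type*} [DecidableEq ι] (s : Finset ι) {k : ι → ℝ}
    (hk : ∀ i ∈ s, 1 ≤ k i) : ∑ i ∈ s, isoBound (k i) ≤ isoBound (∑ i ∈ s, k i - #s + 1) := by
  induction s using Finset.induction_on with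
  | empty => simp [isoBound]
  | insert a s ha ih =>
    have hks : ∀ i ∈ s, 1 ≤ k i := fun i hi => hk i (mem_insert_of_mem hi)
    have hK : 1 ≤ ∑ i ∈ s, k i - #s + 1 := by
      have := card_nsmul_le_sum s k 1 hks
      simp only [nsmul_eq_mul, mul_one] at this
      linarith
    rw [sum_insert ha, sum_insert ha, card_insert_of_notMem ha]
    calc isoBound (k a) + ∑ i ∈ s, isoBound (k i)
        ≤ isoBound (k a) + isoBound (∑ i ∈ s, k i - #s + 1) := by gcongr; exact ih hks
      _ ≤ isoBound (k a + (∑ i ∈ s, k i - #s + 1) - 1) :=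
        isoBound_add_isoBound_le (hk a (mem_insert_self a s)) hK
      _ = isoBound (k a + ∑ i ∈ s, k i - ↑(#s + 1) + 1) := by push_cast; ring_nf

theorem add_rpow_add_rpow_add_one_le {K L : ℝ} (hK : 1 ≤ K) (hL : 0 ≤ L) (h : L ≤ isoBound K) :
    L + (3 * L ^ 2) ^ ((1 : ℝ) / 3) + 2 * (L / 3) ^ ((1 : ℝ) / 3) + 1 ≤ 3 * K := by
  obtain ⟨y, hy, rfl⟩ := Real.exists_pow_three_eq (zero_le_one.trans hK)
  obtain ⟨x, hx, hxL⟩ := Real.exists_pow_three_eq (by positivity : 0 ≤ L / 3)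
  have hy1 : 1 ≤ y := le_of_pow_le_pow_left₀ three_ne_zero hy (by simpa using hK)
  have hL3 : 3 * L ^ 2 = (3 * x ^ 2) ^ 3 := by rw [show L = 3 * x ^ 3 by linarith]; ring
  rw [hL3, Real.pow_three_rpow_one_third (by positivity), ← hxL,
    Real.pow_three_rpow_one_third hx]
  rw [isoBound_pow_three hy] at h
  nlinarith [sq_nonneg (x - y), mul_nonneg hx (sq_nonneg (x - y)), sq_nonneg (x + 1 - y),
    mul_nonneg hx (sub_nonneg.2 hy1)]

theorem card_le_isoBound {q : ℕ} {F : Finset (OEdge q 3)} {T : Finset (Fin 3 → Fin q)}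
    (hF : ∀ e ∈ F, e.1.1 ∈ T ∧ e.1.2 ∈ T) : (#F : ℝ) ≤ isoBound #T := by
  have hcount : (#F : ℝ) + ∑ i, (#(T.image (Fin.removeNth i)) : ℝ) ≤ 3 * #T := by
    exact_mod_cast card_add_sum_card_image_removeNth_le hF
  have hamgm := three_mul_rpow_two_thirds_le_sum (k := #T)
    (s := fun i => #(T.image (Fin.removeNth i))) (Nat.cast_nonneg _) (fun _ => Nat.cast_nonneg _)
    (by exact_mod_cast card_sq_le_prod_card_image_removeNth T)
  rw [isoBound]
  linarith

theorem card_le_isoBound_of_surjective {q : ℕ} {ι : Type*} [Finite ι]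
    {f : (Fin 3 → Fin q) → ι} (hf : Function.Surjective f) {Λ : Finset (OEdge q 3)}
    (hΛ : ∀ e ∈ Λ, f e.1.1 = f e.1.2) : (#Λ : ℝ) ≤ isoBound (q ^ 3 - Nat.card ι + 1) := by
  classical
  have := Fintype.ofFinite ι
  set S : ι → Finset (Fin 3 → Fin q) := fun c => univ.filter (f · = c)
  set E : ι → Finset (OEdge q 3) := fun c => Λ.filter (f ·.1.1 = c)
  have hΛE : #Λ = ∑ c, #(E c) := card_eq_sum_card_fiberwise fun _ _ => mem_univ _
  have hVS : ∑ c, #(S c) = q ^ 3 :=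
    (card_eq_sum_card_fiberwise fun _ _ => mem_univ _).symm.trans (by simp)
  have hES : ∀ c, (#(E c) : ℝ) ≤ isoBound #(S c) := fun c => card_le_isoBound fun e he => by
    obtain ⟨heΛ, rfl⟩ := mem_filter.mp he
    simp [S, hΛ e heΛ]
  have hS : ∀ c, (1 : ℝ) ≤ #(S c) := fun c => by
    obtain ⟨v, rfl⟩ := hf c
    exact_mod_cast card_pos.mpr ⟨v, by simp [S]⟩
  calc (#Λ : ℝ) = ∑ c, (#(E c) : ℝ) := by rw [hΛE]; push_cast; rfl
    _ ≤ ∑ c, isoBound #(S c) := sum_le_sum fun c _ => hES c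
    _ ≤ isoBound (∑ c, (#(S c) : ℝ) - #(univ : Finset ι) + 1) :=
        sum_isoBound_le univ fun c _ => hS c
    _ = isoBound (q ^ 3 - Nat.card ι + 1) := by
        rw [card_univ, ← Nat.card_eq_fintype_card, ← Nat.cast_sum, hVS]; push_cast; rfl

theorem grad_mulVec_apply {q d : ℕ} (u : (Fin d → Fin q) → ℝ) (e : OEdge q d) :
    (grad q d).mulVec u e = u e.1.2 - u e.1.1 := by
  have hne := OEdge.fst_ne_snd e
  simp only [Matrix.mulVec, dotProduct]
  rw [Fintype.sum_eq_add e.1.2 e.1.1 hne.symm fun v hv => by simp [grad, hv.1, hv.2]]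
  simp [grad, hne, sub_eq_add_neg]

theorem mem_Wgrad_iff {q d : ℕ} {Λ : Finset (OEdge q d)} {u : (Fin d → Fin q) → ℝ} :
    u ∈ Wgrad q d Λ ↔ ∀ e ∈ Λ, u e.1.1 = u e.1.2 := by
  simp only [Wgrad, Submodule.mem_iInf, LinearMap.mem_ker, LinearMap.comp_apply,
    Matrix.mulVecLin_apply, LinearMap.proj_apply, grad_mulVec_apply, eq_comm, sub_eq_zero]

theorem kappaGrad_le_iff {q d ℓ N : ℕ} :
    kappaGrad q d ℓ ≤ N ↔
      ∀ Λ : Finset (OEdge q d), ℓ ≤ #Λ → Module.finrank ℝ (Wgrad q d Λ) ≤ N := by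
  simp [kappaGrad]

def edgeGraph {q d : ℕ} (Λ : Finset (OEdge q d)) : SimpleGraph (Fin d → Fin q) :=
  SimpleGraph.fromRel fun v w => ∃ e ∈ Λ, e.1.1 = v ∧ e.1.2 = w

theorem edgeGraph_adj {q d : ℕ} {Λ : Finset (OEdge q d)} {e : OEdge q d} (he : e ∈ Λ) :
    (edgeGraph Λ).Adj e.1.1 e.1.2 :=
  (SimpleGraph.fromRel_adj _ _ _).mpr ⟨OEdge.fst_ne_snd e, Or.inl ⟨e, he, rfl, rfl⟩⟩

theorem finrank_Wgrad_le_card_connectedComponent {q d : ℕ} (Λ : Finset (OEdge q d)) :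
    Module.finrank ℝ (Wgrad q d Λ) ≤ Nat.card (edgeGraph Λ).ConnectedComponent := by
  refine (edgeGraph Λ).finrank_le_card_connectedComponent _ fun u hu v w hvw => ?_
  obtain ⟨-, ⟨e, he, rfl, rfl⟩ | ⟨e, he, rfl, rfl⟩⟩ := (SimpleGraph.fromRel_adj _ _ _).mp hvw
  · exact mem_Wgrad_iff.mp hu e he
  · exact (mem_Wgrad_iff.mp hu e he).symm

theorem three_mul_finrank_Wgrad_add_le {q ℓ : ℕ} {Λ : Finset (OEdge q 3)} (hΛ : ℓ ≤ #Λ) :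
    3 * (Module.finrank ℝ (Wgrad q 3 Λ) : ℝ) + ℓ + (3 * (ℓ : ℝ) ^ 2) ^ ((1 : ℝ) / 3) +
      2 * ((ℓ : ℝ) / 3) ^ ((1 : ℝ) / 3) ≤ 3 * q ^ 3 + 2 := by
  set G := edgeGraph Λ
  have hsurj : Function.Surjective G.connectedComponentMk := Quot.mk_surjective
  have hdim : (Module.finrank ℝ (Wgrad q 3 Λ) : ℝ) ≤ Nat.card G.ConnectedComponent := by
    exact_mod_cast finrank_Wgrad_le_card_connectedComponent Λ
  have hC : (Nat.card G.ConnectedComponent : ℝ) ≤ q ^ 3 := by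
    exact_mod_cast (Nat.card_le_card_of_surjective _ hsurj).trans_eq (by simp)
  have hiso := card_le_isoBound_of_surjective hsurj
    fun e he => SimpleGraph.ConnectedComponent.connectedComponentMk_eq_of_adj (edgeGraph_adj he)
  have := add_rpow_add_rpow_add_one_le (by linarith) (Nat.cast_nonneg ℓ)
    (le_trans (by exact_mod_cast hΛ) hiso)
  linarith

theorem stmt_14_general (q : ℕ) (ℓ : ℕ)
    (m : ℕ)
    (hm : (m : ℝ) ≥ 2 * (q : ℝ) ^ 3 - (2 / 3) * ((ℓ : ℝ) + (3 * (ℓ : ℝ) ^ 2) ^ ((1 : ℝ) / 3) +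
      2 * ((ℓ : ℝ) / 3) ^ ((1 : ℝ) / 3) - 2)) :
    (kappaGrad q 3 ℓ : ℝ) ≤ (m : ℝ) / 2 := by
  have hκ : kappaGrad q 3 ℓ ≤ m / 2 := kappaGrad_le_iff.mpr fun Λ hΛ => by
    rw [Nat.le_div_iff_mul_le two_pos]
    have := three_mul_finrank_Wgrad_add_le hΛ
    exact_mod_cast (by linarith : (Module.finrank ℝ (Wgrad q 3 Λ) : ℝ) * 2 ≤ m)
  exact (Nat.cast_le.mpr hκ).trans Nat.cast_div_le

/-- 3D, unknown cosupport: if `m ≥ 2n − (2/3)(ℓ + (3ℓ²)^{1/3} + 2(ℓ/3)^{1/3} − 2)` with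
`n = q³`, then `κ_∇(ℓ) ≤ m/2`, i.e. `m` measurements meet the sufficient condition of the
unknown-cosupport uniqueness criterion. -/
theorem stmt_14 (q : ℕ) (hq : 3 ≤ q) (ℓ : ℕ) (hl : 54 < ℓ) (hlp : ℓ ≤ 3 * q ^ 2 * (q - 1))
    (m : ℕ)
    (hm : (m : ℝ) ≥ 2 * (q : ℝ) ^ 3 - (2 / 3) * ((ℓ : ℝ) + (3 * (ℓ : ℝ) ^ 2) ^ ((1 : ℝ) / 3) +
      2 * ((ℓ : ℝ) / 3) ^ ((1 : ℝ) / 3) - 2)) :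
    (kappaGrad q 3 ℓ : ℝ) ≤ (m : ℝ) / 2 :=
  stmt_14_general q ℓ m hm
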